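/- Mixing Lemma: Let |ψ⟩ = Σ_{i=1}^{d} α_i |w_i⟩⊗|v_i⟩ be a Schmidt decomposition of an n-qudit state across the cut between qudit 1 and the rest (with {|w_i⟩} orthonormal in ℂ^d, {|v_i⟩} orthonormal in (ℂ^d)^{⊗(n−1)}, α_i ≥ 0, Σα_i² = 1). Define ρ := Σ_{i=1}^{d} α_i² |w_i⟩⟨w_i| ⊗ |v_i⟩⟨v_i|. Then for any orthogonal projector Π on (ℂ^d)^{⊗n}, Tr(Π ρ) ≥ (1/d) · Tr(Π |ψ⟩⟨ψ|). -/

import Mathlib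

/-!
Write `ψ = ∑ᵢ αᵢ uᵢ`. Since `Π` is an orthogonal projector, `Tr(Π |c⟩⟨c|) = ‖Π c‖²` for every
vector `c`, so the claim reads `‖∑ᵢ αᵢ Π uᵢ‖² ≤ d ∑ᵢ αᵢ² ‖Π uᵢ‖²`, which is the Cauchy–Schwarz
inequality `‖∑ᵢ xᵢ‖² ≤ d ∑ᵢ ‖xᵢ‖²` for `d` vectors.
-/

open Matrix BigOperators

theorem norm_sum_sq_le_card_mul_sum_norm_sq {ι E : Type*} [SeminormedAddCommGroup E]
    (s : Finset ι) (f : ι → E) :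
    ‖∑ i ∈ s, f i‖ ^ 2 ≤ s.card * ∑ i ∈ s, ‖f i‖ ^ 2 :=
  (pow_le_pow_left₀ (norm_nonneg _) (norm_sum_le s f) 2).trans (sq_sum_le_card_mul_sum_sq ..)

theorem Matrix.IsHermitian.re_trace_mul_vecMulVec_star_of_mul_self {n : Type*} [Fintype n]
    {P : Matrix n n ℂ} (hP : P.IsHermitian) (hPP : P * P = P) (c : n → ℂ) :
    (trace (P * vecMulVec c (star c))).re = ‖WithLp.toLp 2 (P *ᵥ c)‖ ^ 2 := by
  have h : trace (P * vecMulVec c (star c)) = (P *ᵥ c) ⬝ᵥ star (P *ᵥ c) := by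
    rw [mul_vecMulVec, trace_vecMulVec, star_mulVec, hP.eq, dotProduct_comm _ (star c ᵥ* P),
      ← dotProduct_mulVec, mulVec_mulVec, hPP, dotProduct_comm]
  rw [h, ← inner_self_eq_norm_sq (𝕜 := ℂ)]
  rfl

theorem stmt1_general (d : ℕ) {m : Type*} [Fintype m]
    (α : Fin d → ℝ)
    (u : Fin d → Fin d × m → ℂ)
    (ψ : Fin d × m → ℂ) (hψ : ψ = fun p => ∑ i, (α i : ℂ) * u i p)
    (ρ : Matrix (Fin d × m) (Fin d × m) ℂ)
    (hρ : ρ = ∑ i, (α i ^ 2 : ℝ) • vecMulVec (u i) (star (u i)))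
    (P : Matrix (Fin d × m) (Fin d × m) ℂ)
    (hproj : P * P = P) (hherm : P.IsHermitian) :
    (1 / d : ℝ) * (trace (P * vecMulVec ψ (star ψ))).re ≤ (trace (P * ρ)).re := by
  set y : Fin d → EuclideanSpace ℂ (Fin d × m) := fun i => WithLp.toLp 2 (P *ᵥ u i)
  have hPψ : WithLp.toLp 2 (P *ᵥ ψ) = ∑ i, (α i : ℂ) • y i := by
    have hψsum : ψ = ∑ i, (α i : ℂ) • u i := by ext p; simp [hψ]
    rw [hψsum, mulVec_sum, WithLp.toLp_sum]
    simp only [mulVec_smul, WithLp.toLp_smul, y]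
  have htrρ : (trace (P * ρ)).re = ∑ i, α i ^ 2 * ‖y i‖ ^ 2 := by
    simp only [hρ, Matrix.mul_sum, Matrix.mul_smul, trace_sum, trace_smul, Complex.re_sum,
      Complex.smul_re, hherm.re_trace_mul_vecMulVec_star_of_mul_self hproj, smul_eq_mul, y]
  have hCS : ‖∑ i, (α i : ℂ) • y i‖ ^ 2 ≤ d * ∑ i, α i ^ 2 * ‖y i‖ ^ 2 := by
    simpa [norm_smul, mul_pow] using norm_sum_sq_le_card_mul_sum_norm_sq Finset.univ
      (fun i => (α i : ℂ) • y i)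
  rw [hherm.re_trace_mul_vecMulVec_star_of_mul_self hproj, hPψ, htrρ, one_div_mul_eq_div]
  exact div_le_of_le_mul₀ d.cast_nonneg (by positivity) (hCS.trans_eq (mul_comm _ _))

/-- Mixing Lemma: mixing the Schmidt components of `ψ` across the first cut loses at most
a factor `1/d` against any orthogonal projector `P`. -/
theorem stmt1 (d : ℕ) (hd : 0 < d) {m : Type*} [Fintype m]
    (α : Fin d → ℝ) (hα0 : ∀ i, 0 ≤ α i) (hα1 : ∑ i, α i ^ 2 = 1)
    (w : Fin d → Fin d → ℂ) (v : Fin d → m → ℂ)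
    (hw : ∀ i j, star (w i) ⬝ᵥ w j = if i = j then 1 else 0)
    (hv : ∀ i j, star (v i) ⬝ᵥ v j = if i = j then 1 else 0)
    (u : Fin d → Fin d × m → ℂ) (hu : ∀ i, u i = fun p => w i p.1 * v i p.2)
    (ψ : Fin d × m → ℂ) (hψ : ψ = fun p => ∑ i, (α i : ℂ) * u i p)
    (ρ : Matrix (Fin d × m) (Fin d × m) ℂ)
    (hρ : ρ = ∑ i, (α i ^ 2 : ℝ) • vecMulVec (u i) (star (u i)))
    (P : Matrix (Fin d × m) (Fin d × m) ℂ)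
    (hproj : P * P = P) (hherm : P.IsHermitian) :
    (1 / d : ℝ) * (trace (P * vecMulVec ψ (star ψ))).re ≤ (trace (P * ρ)).re :=
  stmt1_general d α u ψ hψ ρ hρ P hproj hherm
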